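/- Let K = {x ∈ ℝ³ : |x₁| ≤ 10, |x₂| ≤ 10, |x₃| ≤ 10, and |x₁| + |x₂| + |x₃| ≤ 15} and let L = {(20k, 20l, 20m) : k, l, m ∈ ℤ} ∪ {(20k+10, 20l+10, 20m+10) : k, l, m ∈ ℤ}. Then for every p ∈ ℝ³ and every r with 0 ≤ r < (5/2)·√2, the number of vectors v ∈ L such that (v + K) intersects closedBall(p, r) is at most four. -/

import Mathlib

/-!
Write the lattice vectors as `10 • z` with `z ∈ ℤ³` having coordinates of equal parity. Since `K`
lies in the `ℓ¹`-ball of radius `15` and a planar vector has `ℓ¹`-norm at most `√2` times its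
Euclidean norm, a tile `v + K` meeting the ball has `|pᵢ - vᵢ| + |pⱼ - vⱼ| ≤ 15 + √2 r < 20` for
`i ≠ j`. Hence the vectors `z, z'` of two such tiles satisfy `|zᵢ - z'ᵢ| + |zⱼ - z'ⱼ| ≤ 3`: their
difference is `0`, `±2eᵢ`, or lies in `{±1}³`, and in each nonzero case its coordinate sum is not
`0` mod `4`. So `z ↦ z₀ + z₁ + z₂ mod 4` is injective on the tiles meeting the ball.
-/

open Metric Set

/-- The truncated octahedron: the intersection of the cube `[−10,10]³` with the
octahedron `{x : |x₁|+|x₂|+|x₃| ≤ 15}`. -/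
def truncOcta : Set (EuclideanSpace ℝ (Fin 3)) :=
  {x | |x 0| ≤ 10 ∧ |x 1| ≤ 10 ∧ |x 2| ≤ 10 ∧ |x 0| + |x 1| + |x 2| ≤ 15}

/-- The lattice of translation vectors `(20k, 20l, 20m)` and `(20k+10, 20l+10, 20m+10)`
for `k, l, m ∈ ℤ`. -/
def bccLattice : Set (EuclideanSpace ℝ (Fin 3)) :=
  {v | ∃ k l m : ℤ, (v 0 = 20 * k ∧ v 1 = 20 * l ∧ v 2 = 20 * m) ∨
       (v 0 = 20 * k + 10 ∧ v 1 = 20 * l + 10 ∧ v 2 = 20 * m + 10)}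

lemma abs_add_abs_le_sqrt_two_mul_norm {ι : Type*} [Fintype ι] [DecidableEq ι]
    (x : EuclideanSpace ℝ ι) {i j : ι} (hij : i ≠ j) : |x i| + |x j| ≤ √2 * ‖x‖ := by
  have hsq : x i ^ 2 + x j ^ 2 ≤ ‖x‖ ^ 2 := by
    rw [EuclideanSpace.real_norm_sq_eq, ← Finset.sum_pair hij (f := fun k => x k ^ 2)]
    exact Finset.sum_le_sum_of_subset_of_nonneg (Finset.subset_univ _)
      fun _ _ _ => sq_nonneg _
  have hsqrt : √2 ^ 2 = 2 := Real.sq_sqrt zero_le_two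
  apply le_of_pow_le_pow_left₀ two_ne_zero (by positivity)
  nlinarith [sq_nonneg (|x i| - |x j|), sq_abs (x i), sq_abs (x j)]

lemma abs_add_abs_le_of_mem_truncOcta {x : EuclideanSpace ℝ (Fin 3)} (hx : x ∈ truncOcta)
    {i j : Fin 3} (hij : i ≠ j) : |x i| + |x j| ≤ 15 := by
  obtain ⟨-, -, -, h⟩ := hx
  fin_cases i <;> fin_cases j <;> simp at hij ⊢ <;>
    linarith [abs_nonneg (x 0), abs_nonneg (x 1), abs_nonneg (x 2)]

lemma abs_sub_add_abs_sub_le_of_tile_meets_ball {p v : EuclideanSpace ℝ (Fin 3)} {r : ℝ}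
    (hv : ((fun x => v + x) '' truncOcta ∩ closedBall p r).Nonempty)
    {i j : Fin 3} (hij : i ≠ j) : |p i - v i| + |p j - v j| ≤ 15 + √2 * r := by
  obtain ⟨_, ⟨x, hx, rfl⟩, hy⟩ := hv
  have hdist : ‖p - (v + x)‖ ≤ r := by rwa [← dist_eq_norm, dist_comm]
  have hball := abs_add_abs_le_sqrt_two_mul_norm (p - (v + x)) hij
  have hsplit (k : Fin 3) : |p k - v k| ≤ |x k| + |(p - (v + x)) k| := by
    have hk : p k - v k = x k + (p - (v + x)) k := by
      simp only [PiLp.sub_apply, PiLp.add_apply]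
      ring
    rw [hk]
    exact abs_add_le _ _
  linarith [hsplit i, hsplit j, abs_add_abs_le_of_mem_truncOcta hx hij,
    mul_le_mul_of_nonneg_left hdist (Real.sqrt_nonneg 2)]

lemma abs_sub_add_abs_sub_lt_forty {p u w : EuclideanSpace ℝ (Fin 3)} {r : ℝ}
    (hr : r < 5 / 2 * √2)
    (hu : ((fun x => u + x) '' truncOcta ∩ closedBall p r).Nonempty)
    (hw : ((fun x => w + x) '' truncOcta ∩ closedBall p r).Nonempty)
    {i j : Fin 3} (hij : i ≠ j) : |u i - w i| + |u j - w j| < 40 := by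
  have hsqrt_r : √2 * r < 5 := by
    calc √2 * r < √2 * (5 / 2 * √2) := mul_lt_mul_of_pos_left hr (by positivity)
      _ = 5 := by rw [mul_left_comm, Real.mul_self_sqrt zero_le_two]; norm_num
  have htri (k : Fin 3) : |u k - w k| ≤ |p k - u k| + |p k - w k| := by
    rw [abs_sub_comm (p k)]
    exact abs_sub_le _ _ _
  linarith [htri i, htri j, abs_sub_add_abs_sub_le_of_tile_meets_ball hu hij,
    abs_sub_add_abs_sub_le_of_tile_meets_ball hw hij]

noncomputable def bccCoord (v : EuclideanSpace ℝ (Fin 3)) (i : Fin 3) : ℤ := ⌊v i / 10⌋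

lemma bccCoord_eq {v : EuclideanSpace ℝ (Fin 3)} {z : Fin 3 → ℤ} (h : ∀ i, v i = 10 * z i) :
    bccCoord v = z := by
  funext i
  simp [bccCoord, h i]

lemma bccCoord_spec {v : EuclideanSpace ℝ (Fin 3)} (hv : v ∈ bccLattice) :
    (∀ i, v i = 10 * bccCoord v i) ∧ ∀ i j, bccCoord v i ≡ bccCoord v j [ZMOD 2] := by
  suffices ∃ z : Fin 3 → ℤ, (∀ i, v i = 10 * z i) ∧ ∀ i j, z i ≡ z j [ZMOD 2] by
    obtain ⟨z, hz, hpar⟩ := this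
    rw [bccCoord_eq hz]
    exact ⟨hz, hpar⟩
  obtain ⟨k, l, m, ⟨h0, h1, h2⟩ | ⟨h0, h1, h2⟩⟩ := hv
  · refine ⟨![2 * k, 2 * l, 2 * m], fun i => ?_, fun i j => ?_⟩
    · fin_cases i <;> simp [h0, h1, h2] <;> ring
    · fin_cases i <;> fin_cases j <;> simp [Int.ModEq]
  · refine ⟨![2 * k + 1, 2 * l + 1, 2 * m + 1], fun i => ?_, fun i j => ?_⟩
    · fin_cases i <;> simp [h0, h1, h2] <;> ring
    · fin_cases i <;> fin_cases j <;> simp [Int.ModEq]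

lemma eq_of_sum_modEq_four {a b : Fin 3 → ℤ} (ha : ∀ i j, a i ≡ a j [ZMOD 2])
    (hb : ∀ i j, b i ≡ b j [ZMOD 2]) (hclose : ∀ i j, i ≠ j → |a i - b i| + |a j - b j| < 4)
    (hsum : ∑ i, a i ≡ ∑ i, b i [ZMOD 4]) : a = b := by
  have h01 := hclose 0 1 (by decide)
  have h02 := hclose 0 2 (by decide)
  have h12 := hclose 1 2 (by decide)
  have ha01 := ha 0 1
  have ha02 := ha 0 2
  have hb01 := hb 0 1
  have hb02 := hb 0 2
  -- `omega` treats `|·|` as an opaque atom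
  have habs (k : Fin 3) :
      0 ≤ |a k - b k| ∧ (|a k - b k| = a k - b k ∨ |a k - b k| = -(a k - b k)) :=
    ⟨abs_nonneg _, abs_choice _⟩
  have habs0 := habs 0
  have habs1 := habs 1
  have habs2 := habs 2
  simp only [Fin.sum_univ_three, Int.ModEq] at hsum ha01 ha02 hb01 hb02
  funext k
  fin_cases k <;> simp only [Fin.zero_eta, Fin.mk_one, Fin.reduceFinMk] <;> omega

noncomputable def bccColor (v : EuclideanSpace ℝ (Fin 3)) : ZMod 4 :=
  ((∑ i, bccCoord v i : ℤ) : ZMod 4)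

lemma injOn_bccColor {p : EuclideanSpace ℝ (Fin 3)} {r : ℝ} (hr : r < 5 / 2 * √2) :
    {v ∈ bccLattice | ((fun x => v + x) '' truncOcta ∩ closedBall p r).Nonempty}.InjOn
      bccColor := by
  intro u hu w hw hcolor
  obtain ⟨hu10, hupar⟩ := bccCoord_spec hu.1
  obtain ⟨hw10, hwpar⟩ := bccCoord_spec hw.1
  have hclose (i j : Fin 3) (hij : i ≠ j) :
      |bccCoord u i - bccCoord w i| + |bccCoord u j - bccCoord w j| < 4 := by
    have h := abs_sub_add_abs_sub_lt_forty hr hu.2 hw.2 hij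
    rw [hu10 i, hu10 j, hw10 i, hw10 j, ← mul_sub, ← mul_sub, abs_mul, abs_mul,
      abs_of_pos (by norm_num : (0 : ℝ) < 10)] at h
    exact_mod_cast (by linarith : (|(bccCoord u i : ℝ) - bccCoord w i| +
      |(bccCoord u j : ℝ) - bccCoord w j| : ℝ) < 4)
  have hcoord : bccCoord u = bccCoord w :=
    eq_of_sum_modEq_four hupar hwpar hclose ((ZMod.intCast_eq_intCast_iff _ _ 4).1 hcolor)
  ext i
  rw [hu10, hw10, hcoord]

theorem truncOcta_tiling_ball_meets_at_most_four_tiles_general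
    (p : EuclideanSpace ℝ (Fin 3)) (r : ℝ)
    (hr : r < 5 / 2 * Real.sqrt 2) :
    {v ∈ bccLattice | ((fun x => v + x) '' truncOcta ∩ closedBall p r).Nonempty}.encard
      ≤ 4 := by
  calc _ ≤ (univ : Set (ZMod 4)).encard :=
        encard_le_encard_of_injOn (mapsTo_univ _ _) (injOn_bccColor hr)
    _ = 4 := by simp

/-- Every closed ball of radius `r < (5/2)·√2` intersects at most four tiles of the
truncated-octahedron tiling. -/
theorem truncOcta_tiling_ball_meets_at_most_four_tiles
    (p : EuclideanSpace ℝ (Fin 3)) (r : ℝ) (hr0 : 0 ≤ r)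
    (hr : r < 5 / 2 * Real.sqrt 2) :
    {v ∈ bccLattice | ((fun x => v + x) '' truncOcta ∩ closedBall p r).Nonempty}.encard
      ≤ 4 :=
  truncOcta_tiling_ball_meets_at_most_four_tiles_general p r hr
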